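/- arXiv:1708.03734 — 4 statements merged into one kernel-verified Lean document; each statement's English description precedes it below -/
import Mathlib

section
/- If Q1 is a Q⁻-conservative extension of Q2 (written Q2 ⊆⁻ Q1), then Q1 refines Q2, i.e., every subgraph S ⊆ G with S ⊨ Q1 also satisfies S ⊨ Q2. -/
/-! A formal model of Generalized Graph Queries (GGQ).

A GGQ over a data graph `G` with vertex type `V`, path type `P` (with endpoint maps
`psrc`, `pend`) and subgraph type `Sub` consists of: sets of query nodes and query
edges, source/target incidence maps, a sign map (`true` = `+`, `false` = `-`) on
nodes and on edges, and the predicates `θ` on nodes (binary predicates on a data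
vertex and a subgraph) and on edges (binary predicates on a data path and a
subgraph). -/
structure GGQ (NQ EQ V P Sub : Type*) where
  Vq : Set NQ
  Eq : Set EQ
  src : EQ → NQ
  tgt : EQ → NQ
  nsign : NQ → Bool
  esign : EQ → Bool
  ntheta : NQ → V → Sub → Prop
  etheta : EQ → P → Sub → Prop

variable {NQ EQ V P Sub : Type*}

/-- `signedP b p` is `p` if the sign `b` is positive and `¬ p` if it is negative. -/
def signedP (b : Bool) (p : Prop) : Prop := if b then p else ¬ p

/-- The `Q`-predicate `Q_{e^o}(v,S)`: there is a path starting at `v` satisfying the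
edge predicate `θ_e` and whose endpoints satisfy the node predicates of the endpoints
of `e`. -/
def QeO (psrc pend : P → V) (Q : GGQ NQ EQ V P Sub) (e : EQ) (v : V) (S : Sub) : Prop :=
  ∃ ρ : P, psrc ρ = v ∧ Q.etheta e ρ S ∧
    Q.ntheta (Q.src e) (psrc ρ) S ∧ Q.ntheta (Q.tgt e) (pend ρ) S

/-- The `Q`-predicate `Q_{e^i}(v,S)`: there is a path ending at `v` satisfying the
edge predicate `θ_e` and whose endpoints satisfy the node predicates of the endpoints
of `e`. -/
def QeI (psrc pend : P → V) (Q : GGQ NQ EQ V P Sub) (e : EQ) (v : V) (S : Sub) : Prop :=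
  ∃ ρ : P, pend ρ = v ∧ Q.etheta e ρ S ∧
    Q.ntheta (Q.src e) (psrc ρ) S ∧ Q.ntheta (Q.tgt e) (pend ρ) S

/-- The `Q`-predicate `Q_n(S)` of a query node `n`: there is a data vertex `v`
satisfying the signed edge conditions for all query edges incident to `n`. -/
def nodePred (psrc pend : P → V) (Q : GGQ NQ EQ V P Sub) (n : NQ) (S : Sub) : Prop :=
  ∃ v : V, ∀ e ∈ Q.Eq,
    (Q.src e = n → signedP (Q.esign e) (QeO psrc pend Q e v S)) ∧
    (Q.tgt e = n → signedP (Q.esign e) (QeI psrc pend Q e v S))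

/-- `S ⊨ Q`: the conjunction, over all query nodes `n`, of the signed `Q`-predicates
`Q_n^{α(n)}(S)`. -/
def SatQ (psrc pend : P → V) (Q : GGQ NQ EQ V P Sub) (S : Sub) : Prop :=
  ∀ n ∈ Q.Vq, signedP (Q.nsign n) (nodePred psrc pend Q n S)

/-- If `Q₁` is a `Q⁻`-conservative extension of `Q₂` (`Q₂ ⊆⁻ Q₁`: `Q₂ ⊆ Q₁` as
property graphs, and every edge of `Q₁` incident to a negative node of `Q₂` imposes
a restriction equivalent to that of some edge of `Q₂` incident to that node on the
same side), then `Q₁` refines `Q₂`: every subgraph satisfying `Q₁` satisfies `Q₂`. -/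
theorem conservative_extension_refines (psrc pend : P → V)
    (Q₁ Q₂ : GGQ NQ EQ V P Sub)
    (hsrc : Q₁.src = Q₂.src) (htgt : Q₁.tgt = Q₂.tgt)
    (hnsign : Q₁.nsign = Q₂.nsign) (hesign : Q₁.esign = Q₂.esign)
    (hntheta : Q₁.ntheta = Q₂.ntheta) (hetheta : Q₁.etheta = Q₂.etheta)
    (hV : Q₂.Vq ⊆ Q₁.Vq) (hE : Q₂.Eq ⊆ Q₁.Eq)
    (hneg : ∀ n ∈ Q₂.Vq, Q₂.nsign n = false →
      (∀ e ∈ Q₁.Eq, Q₁.src e = n → ∃ e' ∈ Q₂.Eq, Q₂.src e' = n ∧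
        ∀ v S, signedP (Q₁.esign e) (QeO psrc pend Q₁ e v S) ↔
               signedP (Q₂.esign e') (QeO psrc pend Q₂ e' v S)) ∧
      (∀ e ∈ Q₁.Eq, Q₁.tgt e = n → ∃ e' ∈ Q₂.Eq, Q₂.tgt e' = n ∧
        ∀ v S, signedP (Q₁.esign e) (QeI psrc pend Q₁ e v S) ↔
               signedP (Q₂.esign e') (QeI psrc pend Q₂ e' v S))) :
    ∀ S, SatQ psrc pend Q₁ S → SatQ psrc pend Q₂ S := by
  obtain ⟨V1, E1, s1, t1, ns1, es1, nt1, et1⟩ := Q₁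
  obtain ⟨V2, E2, s2, t2, ns2, es2, nt2, et2⟩ := Q₂
  dsimp only at *
  subst hsrc htgt hnsign hesign hntheta hetheta
  intro S h1 n hn
  dsimp only at hn
  have h1n := h1 n (hV hn)
  simp only [signedP, nodePred, QeO, QeI] at h1n ⊢
  by_cases hs : ns1 n = true
  · simp only [hs, if_true] at h1n ⊢
    obtain ⟨v, hv⟩ := h1n
    exact ⟨v, fun e he => hv e (hE he)⟩
  · simp only [Bool.not_eq_true] at hs
    simp only [hs, Bool.false_eq_true, if_false] at h1n ⊢
    rintro ⟨v, hv⟩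
    apply h1n
    refine ⟨v, fun e he => ⟨fun hse => ?_, fun hte => ?_⟩⟩
    · obtain ⟨e', he', hse', hequiv⟩ := (hneg n hn hs).1 e he hse
      have := (hequiv v S).mpr ((hv e' he').1 hse')
      simpa [signedP, QeO] using this
    · obtain ⟨e', he', hte', hequiv⟩ := (hneg n hn hs).2 e he hte
      have := (hequiv v S).mpr ((hv e' he').2 hte')
      simpa [signedP, QeI] using this
end

section
/- Cloning positive nodes preserves query semantics: if Q is a GGQ and W is a subset of the positive nodes of Q, then the clone Cl_Q^W is equivalent to Q, i.e., for every subgraph S ⊆ G, S ⊨ Cl_Q^W if and only if S ⊨ Q. -/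
variable {NQ EQ V P Sub : Type*}

/-- The clone `Cl_Q^W` of `Q` by duplication of `W`: for each `n ∈ W` a fresh copy
`Sum.inr n` with the same sign and predicate is added, together with all edges
obtained from edges incident to nodes of `W` by replacing, in all possible ways,
those endpoints by their copies (an edge `(e, b₁, b₂)` replaces the source of `e`
by its copy iff `b₁`, and the target iff `b₂`); new elements inherit all the
properties of the originals. -/
def cloneQ (Q : GGQ NQ EQ V P Sub) (W : Set NQ) :
    GGQ (NQ ⊕ NQ) (EQ × Bool × Bool) V P Sub where
  Vq := Sum.inl '' Q.Vq ∪ Sum.inr '' W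
  Eq := {x | x.1 ∈ Q.Eq ∧ (x.2.1 = true → Q.src x.1 ∈ W) ∧ (x.2.2 = true → Q.tgt x.1 ∈ W)}
  src := fun x => if x.2.1 then Sum.inr (Q.src x.1) else Sum.inl (Q.src x.1)
  tgt := fun x => if x.2.2 then Sum.inr (Q.tgt x.1) else Sum.inl (Q.tgt x.1)
  nsign := Sum.elim Q.nsign Q.nsign
  esign := fun x => Q.esign x.1
  ntheta := Sum.elim Q.ntheta Q.ntheta
  etheta := fun x => Q.etheta x.1

lemma signedP_congr {b : Bool} {p q : Prop} (h : p ↔ q) : signedP b p ↔ signedP b q := by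
  cases b <;> simp [signedP, h]

lemma clone_QeO (psrc pend : P → V) (Q : GGQ NQ EQ V P Sub) (W : Set NQ)
    (x : EQ × Bool × Bool) (v : V) (S : Sub) :
    QeO psrc pend (cloneQ Q W) x v S ↔ QeO psrc pend Q x.1 v S := by
  obtain ⟨e, b1, b2⟩ := x
  cases b1 <;> cases b2 <;> simp [QeO, cloneQ]

lemma clone_QeI (psrc pend : P → V) (Q : GGQ NQ EQ V P Sub) (W : Set NQ)
    (x : EQ × Bool × Bool) (v : V) (S : Sub) :
    QeI psrc pend (cloneQ Q W) x v S ↔ QeI psrc pend Q x.1 v S := by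
  obtain ⟨e, b1, b2⟩ := x
  cases b1 <;> cases b2 <;> simp [QeI, cloneQ]

lemma clone_nodePred_inl (psrc pend : P → V) (Q : GGQ NQ EQ V P Sub) (W : Set NQ)
    (n : NQ) (S : Sub) :
    nodePred psrc pend (cloneQ Q W) (Sum.inl n) S ↔ nodePred psrc pend Q n S := by
  constructor
  · rintro ⟨v, hv⟩
    refine ⟨v, fun e he => ?_⟩
    have hx := hv (e, false, false) ⟨he, by simp, by simp⟩
    constructor
    · intro hs
      have := hx.1 (by simp [cloneQ, hs])
      exact ((signedP_congr (clone_QeO psrc pend Q W _ v S)).mp this)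
    · intro ht
      have := hx.2 (by simp [cloneQ, ht])
      exact ((signedP_congr (clone_QeI psrc pend Q W _ v S)).mp this)
  · rintro ⟨v, hv⟩
    refine ⟨v, ?_⟩
    rintro ⟨e, b1, b2⟩ ⟨he, h1, h2⟩
    constructor
    · intro hs
      cases b1 <;> simp [cloneQ] at hs
      exact (signedP_congr (clone_QeO psrc pend Q W _ v S)).mpr ((hv e he).1 hs)
    · intro ht
      cases b2 <;> simp [cloneQ] at ht
      exact (signedP_congr (clone_QeI psrc pend Q W _ v S)).mpr ((hv e he).2 ht)

lemma clone_nodePred_inr (psrc pend : P → V) (Q : GGQ NQ EQ V P Sub) (W : Set NQ)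
    (n : NQ) (hn : n ∈ W) (S : Sub) :
    nodePred psrc pend (cloneQ Q W) (Sum.inr n) S ↔ nodePred psrc pend Q n S := by
  constructor
  · rintro ⟨v, hv⟩
    refine ⟨v, fun e he => ?_⟩
    constructor
    · intro hs
      have hx := hv (e, true, false) ⟨he, fun _ => hs ▸ hn, by simp⟩
      have := hx.1 (by simp [cloneQ, hs])
      exact ((signedP_congr (clone_QeO psrc pend Q W _ v S)).mp this)
    · intro ht
      have hx := hv (e, false, true) ⟨he, by simp, fun _ => ht ▸ hn⟩
      have := hx.2 (by simp [cloneQ, ht])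
      exact ((signedP_congr (clone_QeI psrc pend Q W _ v S)).mp this)
  · rintro ⟨v, hv⟩
    refine ⟨v, ?_⟩
    rintro ⟨e, b1, b2⟩ ⟨he, h1, h2⟩
    constructor
    · intro hs
      cases b1 <;> simp [cloneQ] at hs
      exact (signedP_congr (clone_QeO psrc pend Q W _ v S)).mpr ((hv e he).1 hs)
    · intro ht
      cases b2 <;> simp [cloneQ] at ht
      exact (signedP_congr (clone_QeI psrc pend Q W _ v S)).mpr ((hv e he).2 ht)

/-- Cloning positive nodes preserves query semantics: if `W` is a set of positive
nodes of the GGQ `Q`, then for every subgraph `S`, `S ⊨ Cl_Q^W` iff `S ⊨ Q`. -/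
theorem clone_positive_nodes_equiv (psrc pend : P → V) (Q : GGQ NQ EQ V P Sub)
    (W : Set NQ) (hW : W ⊆ Q.Vq) (hpos : ∀ n ∈ W, Q.nsign n = true) :
    ∀ S, SatQ psrc pend (cloneQ Q W) S ↔ SatQ psrc pend Q S := by
  intro S
  constructor
  · intro h n hn
    have := h (Sum.inl n) (Or.inl ⟨n, hn, rfl⟩)
    simpa using (signedP_congr (clone_nodePred_inl psrc pend Q W n S)).mp
      (by simpa [cloneQ] using this)
  · intro h m hm
    rcases hm with ⟨n, hn, rfl⟩ | ⟨n, hn, rfl⟩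
    · simpa [cloneQ] using
        (signedP_congr (clone_nodePred_inl psrc pend Q W n S)).mpr (h n hn)
    · simpa [cloneQ] using
        (signedP_congr (clone_nodePred_inr psrc pend Q W n hn S)).mpr (h n (hW hn))
end

section
/- Adding an edge between two distinct positive nodes yields a refinement set of size four: given a GGQ Q and distinct positive nodes n, m, let Q' be the clone of Q duplicating {n, m}; then the four GGQs Q1, Q2, Q3, Q4 obtained from Q' by adding a new edge e from n to m with tautological predicate and assigning to (n, m) the sign patterns (+,+), (+,-), (-,+), (-,-) respectively, form a refinement set of Q in G: each Qi refines Q, and every subgraph S satisfying Q satisfies exactly one Qi. -/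
variable {NQ EQ V P Sub : Type*}

/-- `Q + {n →e m}` with sign pattern `(s₁, s₂)`: first clone `Q` duplicating
`{n, m}`, then add a new edge (with sign `es` and tautological predicate) from the
original `n` to the original `m`, and reassign to `n` and `m` the signs `s₁`, `s₂`. -/
def addEdge [DecidableEq NQ] (Q : GGQ NQ EQ V P Sub) (n m : NQ) (s₁ s₂ es : Bool) :
    GGQ (NQ ⊕ NQ) ((EQ × Bool × Bool) ⊕ Unit) V P Sub :=
  let C := cloneQ Q {n, m}
  { Vq := C.Vq
    Eq := Sum.inl '' C.Eq ∪ {Sum.inr ()}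
    src := Sum.elim C.src (fun _ => Sum.inl n)
    tgt := Sum.elim C.tgt (fun _ => Sum.inl m)
    nsign := fun x => if x = Sum.inl n then s₁ else if x = Sum.inl m then s₂ else C.nsign x
    esign := Sum.elim C.esign (fun _ => es)
    ntheta := C.ntheta
    etheta := Sum.elim C.etheta (fun _ => fun _ _ => True) }

section AuxRefine

lemma signedP_iff {p q : Prop} (h : p ↔ q) (b : Bool) : signedP b p ↔ signedP b q := by
  cases b <;> simp [signedP, h]

lemma signedP_unique {p : Prop} {b b' : Bool} (h : signedP b p) (h' : signedP b' p) :
    b = b' := by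
  cases b <;> cases b' <;> simp_all [signedP]

lemma signedP_ite (p : Prop) [Decidable p] : signedP (if p then true else false) p := by
  split <;> simp_all [signedP]

variable (psrc pend : P → V)

/-- The conjunction of signed edge conditions at node `x` witnessed by data vertex `v`. -/
def condAt {NQ' EQ' : Type*} (A : GGQ NQ' EQ' V P Sub) (x : NQ') (v : V) (S : Sub) : Prop :=
  ∀ e ∈ A.Eq, (A.src e = x → signedP (A.esign e) (QeO psrc pend A e v S)) ∧
    (A.tgt e = x → signedP (A.esign e) (QeI psrc pend A e v S))

lemma nodePred_eq {NQ' EQ' : Type*} (A : GGQ NQ' EQ' V P Sub) (x : NQ') (S : Sub) :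
    nodePred psrc pend A x S = ∃ v, condAt psrc pend A x v S := rfl

variable (Q : GGQ NQ EQ V P Sub)

/-- The `Q_{e^o}` predicate of the new edge. -/
def NeO (n m : NQ) (v : V) (S : Sub) : Prop :=
  ∃ ρ : P, psrc ρ = v ∧ Q.ntheta n (psrc ρ) S ∧ Q.ntheta m (pend ρ) S

/-- The `Q_{e^i}` predicate of the new edge. -/
def NeI (n m : NQ) (v : V) (S : Sub) : Prop :=
  ∃ ρ : P, pend ρ = v ∧ Q.ntheta n (psrc ρ) S ∧ Q.ntheta m (pend ρ) S

variable [DecidableEq NQ] (n m : NQ) (s₁ s₂ es : Bool)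

lemma QeO_inl (x : EQ × Bool × Bool) (v : V) (S : Sub) :
    QeO psrc pend (addEdge Q n m s₁ s₂ es) (Sum.inl x) v S ↔ QeO psrc pend Q x.1 v S := by
  obtain ⟨e, b1, b2⟩ := x
  cases b1 <;> cases b2 <;> simp [QeO, addEdge, cloneQ]

lemma QeI_inl (x : EQ × Bool × Bool) (v : V) (S : Sub) :
    QeI psrc pend (addEdge Q n m s₁ s₂ es) (Sum.inl x) v S ↔ QeI psrc pend Q x.1 v S := by
  obtain ⟨e, b1, b2⟩ := x
  cases b1 <;> cases b2 <;> simp [QeI, addEdge, cloneQ]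

lemma QeO_inr (v : V) (S : Sub) :
    QeO psrc pend (addEdge Q n m s₁ s₂ es) (Sum.inr ()) v S ↔ NeO psrc pend Q n m v S := by
  simp [QeO, NeO, addEdge, cloneQ]

lemma QeI_inr (v : V) (S : Sub) :
    QeI psrc pend (addEdge Q n m s₁ s₂ es) (Sum.inr ()) v S ↔ NeI psrc pend Q n m v S := by
  simp [QeI, NeI, addEdge, cloneQ]

lemma condAt_inr (k : NQ) (hk : k = n ∨ k = m) (v : V) (S : Sub) :
    condAt psrc pend (addEdge Q n m s₁ s₂ es) (Sum.inr k) v S ↔ condAt psrc pend Q k v S := by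
  constructor
  · intro h e he
    refine ⟨fun hs => ?_, fun ht => ?_⟩
    · have hmem : Sum.inl (e, true, false) ∈ (addEdge Q n m s₁ s₂ es).Eq :=
        Or.inl ⟨(e, true, false), ⟨he, fun _ => by rw [hs]; rcases hk with rfl | rfl <;> simp,
          by simp⟩, rfl⟩
      have h1 := (h _ hmem).1 (by simp [addEdge, cloneQ, hs])
      rw [QeO_inl] at h1
      exact h1
    · have hmem : Sum.inl (e, false, true) ∈ (addEdge Q n m s₁ s₂ es).Eq :=
        Or.inl ⟨(e, false, true), ⟨he, by simp,
          fun _ => by rw [ht]; rcases hk with rfl | rfl <;> simp⟩, rfl⟩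
      have h1 := (h _ hmem).2 (by simp [addEdge, cloneQ, ht])
      rw [QeI_inl] at h1
      exact h1
  · intro h e' he'
    obtain ⟨⟨e, b1, b2⟩, ⟨he, hb1, hb2⟩, rfl⟩ | rfl := he'
    · refine ⟨fun hs => ?_, fun ht => ?_⟩
      · cases b1 with
        | false => simp [addEdge, cloneQ] at hs
        | true =>
          have hk' : Q.src e = k := by simpa [addEdge, cloneQ] using hs
          rw [QeO_inl]
          exact (h e he).1 hk'
      · cases b2 with
        | false => simp [addEdge, cloneQ] at ht
        | true =>
          have hk' : Q.tgt e = k := by simpa [addEdge, cloneQ] using ht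
          rw [QeI_inl]
          exact (h e he).2 hk'
    · exact ⟨fun hh => by simp [addEdge] at hh, fun hh => by simp [addEdge] at hh⟩

lemma condAt_inl_other (k : NQ) (hkn : k ≠ n) (hkm : k ≠ m) (v : V) (S : Sub) :
    condAt psrc pend (addEdge Q n m s₁ s₂ es) (Sum.inl k) v S ↔ condAt psrc pend Q k v S := by
  constructor
  · intro h e he
    have hmem : Sum.inl (e, false, false) ∈ (addEdge Q n m s₁ s₂ es).Eq :=
      Or.inl ⟨(e, false, false), ⟨he, by simp, by simp⟩, rfl⟩
    refine ⟨fun hs => ?_, fun ht => ?_⟩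
    · have h1 := (h _ hmem).1 (by simp [addEdge, cloneQ, hs])
      rw [QeO_inl] at h1
      exact h1
    · have h1 := (h _ hmem).2 (by simp [addEdge, cloneQ, ht])
      rw [QeI_inl] at h1
      exact h1
  · intro h e' he'
    obtain ⟨⟨e, b1, b2⟩, ⟨he, hb1, hb2⟩, rfl⟩ | rfl := he'
    · refine ⟨fun hs => ?_, fun ht => ?_⟩
      · cases b1 with
        | true => simp [addEdge, cloneQ] at hs
        | false =>
          have hk' : Q.src e = k := by simpa [addEdge, cloneQ] using hs
          rw [QeO_inl]
          exact (h e he).1 hk'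
      · cases b2 with
        | true => simp [addEdge, cloneQ] at ht
        | false =>
          have hk' : Q.tgt e = k := by simpa [addEdge, cloneQ] using ht
          rw [QeI_inl]
          exact (h e he).2 hk'
    · refine ⟨fun hh => ?_, fun hh => ?_⟩
      · exact absurd (Sum.inl.inj hh) (Ne.symm hkn)
      · exact absurd (Sum.inl.inj hh) (Ne.symm hkm)

lemma condAt_inl_n (hnm : n ≠ m) (v : V) (S : Sub) :
    condAt psrc pend (addEdge Q n m s₁ s₂ es) (Sum.inl n) v S ↔
      condAt psrc pend Q n v S ∧ signedP es (NeO psrc pend Q n m v S) := by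
  constructor
  · intro h
    refine ⟨fun e he => ?_, ?_⟩
    · have hmem : Sum.inl (e, false, false) ∈ (addEdge Q n m s₁ s₂ es).Eq :=
        Or.inl ⟨(e, false, false), ⟨he, by simp, by simp⟩, rfl⟩
      refine ⟨fun hs => ?_, fun ht => ?_⟩
      · have h1 := (h _ hmem).1 (by simp [addEdge, cloneQ, hs])
        rw [QeO_inl] at h1
        exact h1
      · have h1 := (h _ hmem).2 (by simp [addEdge, cloneQ, ht])
        rw [QeI_inl] at h1
        exact h1
    · have h1 := (h (Sum.inr ()) (Or.inr rfl)).1 rfl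
      rw [QeO_inr] at h1
      exact h1
  · rintro ⟨h, hne⟩ e' he'
    obtain ⟨⟨e, b1, b2⟩, ⟨he, hb1, hb2⟩, rfl⟩ | rfl := he'
    · refine ⟨fun hs => ?_, fun ht => ?_⟩
      · cases b1 with
        | true => simp [addEdge, cloneQ] at hs
        | false =>
          have hk' : Q.src e = n := by simpa [addEdge, cloneQ] using hs
          rw [QeO_inl]
          exact (h e he).1 hk'
      · cases b2 with
        | true => simp [addEdge, cloneQ] at ht
        | false =>
          have hk' : Q.tgt e = n := by simpa [addEdge, cloneQ] using ht
          rw [QeI_inl]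
          exact (h e he).2 hk'
    · refine ⟨fun _ => ?_, fun hh => ?_⟩
      · rw [QeO_inr]
        exact hne
      · exact absurd (Sum.inl.inj hh) (Ne.symm hnm)

lemma condAt_inl_m (hnm : n ≠ m) (v : V) (S : Sub) :
    condAt psrc pend (addEdge Q n m s₁ s₂ es) (Sum.inl m) v S ↔
      condAt psrc pend Q m v S ∧ signedP es (NeI psrc pend Q n m v S) := by
  constructor
  · intro h
    refine ⟨fun e he => ?_, ?_⟩
    · have hmem : Sum.inl (e, false, false) ∈ (addEdge Q n m s₁ s₂ es).Eq :=
        Or.inl ⟨(e, false, false), ⟨he, by simp, by simp⟩, rfl⟩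
      refine ⟨fun hs => ?_, fun ht => ?_⟩
      · have h1 := (h _ hmem).1 (by simp [addEdge, cloneQ, hs])
        rw [QeO_inl] at h1
        exact h1
      · have h1 := (h _ hmem).2 (by simp [addEdge, cloneQ, ht])
        rw [QeI_inl] at h1
        exact h1
    · have h1 := (h (Sum.inr ()) (Or.inr rfl)).2 rfl
      rw [QeI_inr] at h1
      exact h1
  · rintro ⟨h, hne⟩ e' he'
    obtain ⟨⟨e, b1, b2⟩, ⟨he, hb1, hb2⟩, rfl⟩ | rfl := he'
    · refine ⟨fun hs => ?_, fun ht => ?_⟩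
      · cases b1 with
        | true => simp [addEdge, cloneQ] at hs
        | false =>
          have hk' : Q.src e = m := by simpa [addEdge, cloneQ] using hs
          rw [QeO_inl]
          exact (h e he).1 hk'
      · cases b2 with
        | true => simp [addEdge, cloneQ] at ht
        | false =>
          have hk' : Q.tgt e = m := by simpa [addEdge, cloneQ] using ht
          rw [QeI_inl]
          exact (h e he).2 hk'
    · refine ⟨fun hh => ?_, fun _ => ?_⟩
      · exact absurd (Sum.inl.inj hh) hnm
      · rw [QeI_inr]
        exact hne

lemma nsign_inr (k : NQ) :
    (addEdge Q n m s₁ s₂ es).nsign (Sum.inr k) = Q.nsign k := by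
  simp [addEdge, cloneQ]

lemma nsign_inl_n : (addEdge Q n m s₁ s₂ es).nsign (Sum.inl n) = s₁ := by
  simp [addEdge]

lemma nsign_inl_m (hnm : n ≠ m) : (addEdge Q n m s₁ s₂ es).nsign (Sum.inl m) = s₂ := by
  simp [addEdge, Ne.symm hnm]

lemma nsign_inl_other (k : NQ) (hkn : k ≠ n) (hkm : k ≠ m) :
    (addEdge Q n m s₁ s₂ es).nsign (Sum.inl k) = Q.nsign k := by
  simp [addEdge, cloneQ, hkn, hkm]

end AuxRefine

/-- Adding a new edge between two distinct positive nodes yields a refinement set of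
size four: each of the four sign-pattern queries refines `Q`, and every subgraph
satisfying `Q` satisfies exactly one of them. -/
theorem addEdge_refinement_set [DecidableEq NQ] (psrc pend : P → V)
    (Q : GGQ NQ EQ V P Sub) (n m : NQ) (es : Bool)
    (hn : n ∈ Q.Vq) (hm : m ∈ Q.Vq) (hnm : n ≠ m)
    (hpn : Q.nsign n = true) (hpm : Q.nsign m = true) :
    (∀ (s₁ s₂ : Bool) (S : Sub),
        SatQ psrc pend (addEdge Q n m s₁ s₂ es) S → SatQ psrc pend Q S) ∧
    (∀ S : Sub, SatQ psrc pend Q S →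
        ∃! p : Bool × Bool, SatQ psrc pend (addEdge Q n m p.1 p.2 es) S) := by
  constructor
  · intro s₁ s₂ S hS k hk
    by_cases hkn : k = n
    · subst hkn
      have h1 := hS (Sum.inr k) (Or.inr ⟨k, Or.inl rfl, rfl⟩)
      rw [nsign_inr, hpn] at h1
      rw [hpn]
      simp only [signedP, if_true] at h1 ⊢
      obtain ⟨v, hv⟩ := h1
      exact ⟨v, (condAt_inr psrc pend Q k m s₁ s₂ es k (Or.inl rfl) v S).mp hv⟩
    · by_cases hkm : k = m
      · subst hkm
        have h1 := hS (Sum.inr k) (Or.inr ⟨k, Or.inr rfl, rfl⟩)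
        rw [nsign_inr, hpm] at h1
        rw [hpm]
        simp only [signedP, if_true] at h1 ⊢
        obtain ⟨v, hv⟩ := h1
        exact ⟨v, (condAt_inr psrc pend Q n k s₁ s₂ es k (Or.inr rfl) v S).mp hv⟩
      · have h1 := hS (Sum.inl k) (Or.inl ⟨k, hk, rfl⟩)
        rw [nsign_inl_other Q n m s₁ s₂ es k hkn hkm] at h1
        rw [nodePred_eq, signedP_iff
          (exists_congr fun v => condAt_inl_other psrc pend Q n m s₁ s₂ es k hkn hkm v S)] at h1
        exact h1
  · intro S hS
    classical
    have hcopy : ∀ (s₁ s₂ : Bool) (k : NQ), k = n ∨ k = m →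
        signedP ((addEdge Q n m s₁ s₂ es).nsign (Sum.inr k))
          (nodePred psrc pend (addEdge Q n m s₁ s₂ es) (Sum.inr k) S) := by
      intro s₁ s₂ k hk
      rw [nsign_inr, nodePred_eq,
        signedP_iff (exists_congr fun v => condAt_inr psrc pend Q n m s₁ s₂ es k hk v S)]
      rcases hk with rfl | rfl
      · exact hS k hn
      · exact hS k hm
    have hother : ∀ (s₁ s₂ : Bool) (k : NQ), k ∈ Q.Vq → k ≠ n → k ≠ m →
        signedP ((addEdge Q n m s₁ s₂ es).nsign (Sum.inl k))
          (nodePred psrc pend (addEdge Q n m s₁ s₂ es) (Sum.inl k) S) := by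
      intro s₁ s₂ k hk hkn hkm
      rw [nsign_inl_other Q n m s₁ s₂ es k hkn hkm, nodePred_eq,
        signedP_iff (exists_congr fun v => condAt_inl_other psrc pend Q n m s₁ s₂ es k hkn hkm v S)]
      exact hS k hk
    set PnP : Prop :=
      ∃ v, condAt psrc pend Q n v S ∧ signedP es (NeO psrc pend Q n m v S) with hPnP
    set PmP : Prop :=
      ∃ v, condAt psrc pend Q m v S ∧ signedP es (NeI psrc pend Q n m v S) with hPmP
    have hnodeN : ∀ s₁ s₂ : Bool,
        nodePred psrc pend (addEdge Q n m s₁ s₂ es) (Sum.inl n) S ↔ PnP := fun s₁ s₂ => by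
      rw [nodePred_eq]
      exact exists_congr fun v => condAt_inl_n psrc pend Q n m s₁ s₂ es hnm v S
    have hnodeM : ∀ s₁ s₂ : Bool,
        nodePred psrc pend (addEdge Q n m s₁ s₂ es) (Sum.inl m) S ↔ PmP := fun s₁ s₂ => by
      rw [nodePred_eq]
      exact exists_congr fun v => condAt_inl_m psrc pend Q n m s₁ s₂ es hnm v S
    refine ⟨(if PnP then true else false, if PmP then true else false), ?_, ?_⟩
    · intro x hx
      obtain ⟨k, hk, rfl⟩ | ⟨k, hk, rfl⟩ := hx
      · by_cases hkn : k = n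
        · subst hkn
          rw [nsign_inl_n, signedP_iff (hnodeN _ _)]
          exact signedP_ite PnP
        · by_cases hkm : k = m
          · subst hkm
            rw [nsign_inl_m Q _ _ _ _ _ hnm, signedP_iff (hnodeM _ _)]
            exact signedP_ite PmP
          · exact hother _ _ k hk hkn hkm
      · exact hcopy _ _ k (by simpa using hk)
    · rintro ⟨q1, q2⟩ hq
      have h1 := hq (Sum.inl n) (Or.inl ⟨n, hn, rfl⟩)
      rw [nsign_inl_n, signedP_iff (hnodeN _ _)] at h1
      have h2 := hq (Sum.inl m) (Or.inl ⟨m, hm, rfl⟩)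
      rw [nsign_inl_m Q n m _ _ es hnm, signedP_iff (hnodeM _ _)] at h2
      exact Prod.ext (signedP_unique h1 (signedP_ite PnP)) (signedP_unique h2 (signedP_ite PmP))
end

section
/- Redundant positive node elimination: let Q be a GGQ and n a positive node such that there exists a node m ≠ n with α(n) = α(m), θ_n equivalent to θ_m, and for every edge e incident to n there exists an edge e' incident to m with α(e) = α(e'), θ_e = θ_{e'}, and the incidence of e with n removed equals the incidence of e' with m removed. Then n is redundant in Q, i.e., Q is equivalent in G to the GGQ Q − {n} obtained by deleting n and all its incident edges. -/
variable {NQ EQ V P Sub : Type*}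

/-- `Q − {n}`: delete the node `n` and all edges incident to it. -/
def removeNode (Q : GGQ NQ EQ V P Sub) (n : NQ) : GGQ NQ EQ V P Sub :=
  { Q with
    Vq := Q.Vq \ {n}
    Eq := {e ∈ Q.Eq | Q.src e ≠ n ∧ Q.tgt e ≠ n} }

open Classical in
/-- Redundant positive node elimination: if `n` is a positive node and there is a
node `m ≠ n` with the same sign, an equivalent predicate, and such that every edge
incident to `n` has a counterpart incident to `m` with the same sign, the same
predicate, and the same incidence once `n` (resp. `m`) is removed, then `n` is
redundant: `Q` is equivalent to `Q − {n}`. -/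
theorem redundant_positive_node (psrc pend : P → V) (Q : GGQ NQ EQ V P Sub)
    (n m : NQ) (hn : n ∈ Q.Vq) (hpos : Q.nsign n = true)
    (hm : m ∈ Q.Vq) (hmn : m ≠ n)
    (hsign : Q.nsign m = Q.nsign n)
    (htheta : ∀ v S, Q.ntheta m v S ↔ Q.ntheta n v S)
    (hedges : ∀ e ∈ Q.Eq, (Q.src e = n ∨ Q.tgt e = n) →
      ∃ e' ∈ Q.Eq, Q.esign e' = Q.esign e ∧ Q.etheta e' = Q.etheta e ∧
        Q.src e' = (if Q.src e = n then m else Q.src e) ∧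
        Q.tgt e' = (if Q.tgt e = n then m else Q.tgt e)) :
    ∀ S, SatQ psrc pend Q S ↔ SatQ psrc pend (removeNode Q n) S := by
  intro S
  classical
  have signedP_congr : ∀ (b : Bool) {p q : Prop}, (p ↔ q) → (signedP b p ↔ signedP b q) := by
    intro b p q h; unfold signedP; cases b <;> simp [h]
  -- transfer of QeO/QeI along counterpart edges
  have hQe : ∀ (e e' : EQ), Q.etheta e' = Q.etheta e →
      Q.src e' = (if Q.src e = n then m else Q.src e) →
      Q.tgt e' = (if Q.tgt e = n then m else Q.tgt e) →
      ∀ v, (QeO psrc pend Q e' v S ↔ QeO psrc pend Q e v S) ∧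
           (QeI psrc pend Q e' v S ↔ QeI psrc pend Q e v S) := by
    intro e e' ht hsrc htgt v
    have hns : ∀ w, Q.ntheta (Q.src e') w S ↔ Q.ntheta (Q.src e) w S := by
      intro w; rw [hsrc]
      by_cases h : Q.src e = n
      · rw [if_pos h, h]; exact htheta w S
      · rw [if_neg h]
    have hnt : ∀ w, Q.ntheta (Q.tgt e') w S ↔ Q.ntheta (Q.tgt e) w S := by
      intro w; rw [htgt]
      by_cases h : Q.tgt e = n
      · rw [if_pos h, h]; exact htheta w S
      · rw [if_neg h]
    constructor
    · unfold QeO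
      apply exists_congr; intro ρ
      rw [ht]
      exact and_congr_right fun _ => and_congr_right fun _ => and_congr (hns _) (hnt _)
    · unfold QeI
      apply exists_congr; intro ρ
      rw [ht]
      exact and_congr_right fun _ => and_congr_right fun _ => and_congr (hns _) (hnt _)
  -- membership of counterpart edges in the reduced query
  have hmem : ∀ (e e' : EQ), e' ∈ Q.Eq →
      Q.src e' = (if Q.src e = n then m else Q.src e) →
      Q.tgt e' = (if Q.tgt e = n then m else Q.tgt e) →
      e' ∈ (removeNode Q n).Eq := by
    intro e e' he' hsrc htgt
    refine ⟨he', ?_, ?_⟩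
    · rw [hsrc]; by_cases h : Q.src e = n
      · rw [if_pos h]; exact hmn
      · rw [if_neg h]; exact h
    · rw [htgt]; by_cases h : Q.tgt e = n
      · rw [if_pos h]; exact hmn
      · rw [if_neg h]; exact h
  -- restriction: nodePred Q n' S → nodePred (removeNode Q n) n' S
  have restrict : ∀ n', nodePred psrc pend Q n' S →
      nodePred psrc pend (removeNode Q n) n' S := by
    rintro n' ⟨v, hv⟩
    exact ⟨v, fun e he => hv e he.1⟩
  -- transfer: for n' ≠ n, nodePred (removeNode Q n) n' S → nodePred Q n' S
  have transfer : ∀ n', n' ≠ n → nodePred psrc pend (removeNode Q n) n' S →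
      nodePred psrc pend Q n' S := by
    rintro n' hne ⟨v, hv⟩
    refine ⟨v, fun e he => ?_⟩
    by_cases hinc : Q.src e = n ∨ Q.tgt e = n
    · obtain ⟨e', he', hs, ht, hsrc, htgt⟩ := hedges e he hinc
      have hv' : (Q.src e' = n' → signedP (Q.esign e') (QeO psrc pend Q e' v S)) ∧
          (Q.tgt e' = n' → signedP (Q.esign e') (QeI psrc pend Q e' v S)) :=
        hv e' (hmem e e' he' hsrc htgt)
      constructor
      · intro hsn'
        have hsne : Q.src e ≠ n := by rw [hsn']; exact hne
        have hsrc' : Q.src e' = n' := by rw [hsrc, if_neg hsne, hsn']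
        have h1 := hv'.1 hsrc'
        rw [hs] at h1
        exact (signedP_congr _ ((hQe e e' ht hsrc htgt v).1)).mp h1
      · intro htn'
        have htne : Q.tgt e ≠ n := by rw [htn']; exact hne
        have htgt' : Q.tgt e' = n' := by rw [htgt, if_neg htne, htn']
        have h1 := hv'.2 htgt'
        rw [hs] at h1
        exact (signedP_congr _ ((hQe e e' ht hsrc htgt v).2)).mp h1
    · push_neg at hinc
      exact hv e ⟨he, hinc.1, hinc.2⟩
  -- the predicate of n is recovered from that of m
  have recoverN : nodePred psrc pend (removeNode Q n) m S → nodePred psrc pend Q n S := by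
    rintro ⟨v, hv⟩
    refine ⟨v, fun e he => ?_⟩
    constructor
    · intro hsn
      obtain ⟨e', he', hs, ht, hsrc, htgt⟩ := hedges e he (Or.inl hsn)
      have hsrc' : Q.src e' = m := by rw [hsrc, if_pos hsn]
      have hv' : (Q.src e' = m → signedP (Q.esign e') (QeO psrc pend Q e' v S)) ∧
          (Q.tgt e' = m → signedP (Q.esign e') (QeI psrc pend Q e' v S)) :=
        hv e' (hmem e e' he' hsrc htgt)
      have h1 := hv'.1 hsrc'
      rw [hs] at h1
      exact (signedP_congr _ ((hQe e e' ht hsrc htgt v).1)).mp h1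
    · intro htn
      obtain ⟨e', he', hs, ht, hsrc, htgt⟩ := hedges e he (Or.inr htn)
      have htgt' : Q.tgt e' = m := by rw [htgt, if_pos htn]
      have hv' : (Q.src e' = m → signedP (Q.esign e') (QeO psrc pend Q e' v S)) ∧
          (Q.tgt e' = m → signedP (Q.esign e') (QeI psrc pend Q e' v S)) :=
        hv e' (hmem e e' he' hsrc htgt)
      have h1 := hv'.2 htgt'
      rw [hs] at h1
      exact (signedP_congr _ ((hQe e e' ht hsrc htgt v).2)).mp h1
  constructor
  · intro hS n' hn'
    have hne : n' ≠ n := hn'.2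
    have h : signedP (Q.nsign n') (nodePred psrc pend Q n' S) := hS n' hn'.1
    show signedP (Q.nsign n') (nodePred psrc pend (removeNode Q n) n' S)
    cases hb : Q.nsign n' with
    | true =>
      rw [hb] at h
      exact restrict n' h
    | false =>
      rw [hb] at h
      exact fun hc => h (transfer n' hne hc)
  · intro hS n' hn'
    show signedP (Q.nsign n') (nodePred psrc pend Q n' S)
    by_cases hcase : n' = n
    · rw [hcase, hpos]
      have hMm : signedP (Q.nsign m) (nodePred psrc pend (removeNode Q n) m S) :=
        hS m ⟨hm, hmn⟩
      rw [hsign, hpos] at hMm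
      exact recoverN hMm
    · have h : signedP (Q.nsign n') (nodePred psrc pend (removeNode Q n) n' S) :=
        hS n' ⟨hn', hcase⟩
      cases hb : Q.nsign n' with
      | true => rw [hb] at h; exact transfer n' hcase h
      | false => rw [hb] at h; exact fun hc => h (restrict n' hc)
end
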